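/- arXiv:2412.07941 — 4 statements merged into one kernel-verified Lean document; each statement's English description precedes it below -/
import Mathlib

section
/- The retrieval function R is invariant under filling unobserved entries with its own outputs: if a sequence w⃗ has the same length as s⃗, extends s⃗ pointwise (s⃗[t] ⊆ w⃗[t] for all t), and every assignment of w⃗ not in s⃗ equals the value predicted by R on s⃗ at that index (w⃗[t](v) = R(s⃗, t, v) whenever v ∈ dom(w⃗[t]) \ dom(s⃗[t])), then R(w⃗, t, v) = R(s⃗, t, v) for all t < |s⃗| and all v (Recursive Consistency of pr_static). -/
/-- A state: a partial function from variables to values. -/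
abbrev State (V D : Type) := V → Option D

/-- `Ssub s s'` : every assignment of `s` occurs in `s'`. -/
def Ssub {V D : Type} (s s' : State V D) : Prop :=
  ∀ v e, s v = some e → s' v = some e

/-- State override `s'⟨s⟩`: keep `s`, fill unassigned variables from `s'`. -/
def override {V D : Type} (s' s : State V D) : State V D :=
  fun v => (s v).orElse (fun _ => s' v)

/-- The retrieval function `R` of the JP model: most recent non-⊥ value of `v`
at or before `m`, else earliest one after `m`, else `⊥`. -/
def Rfun {V D : Type} [DecidableEq D] (bot : D) (seq : List (State V D))
    (m : ℕ) (v : V) : D :=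
  let LT := (Finset.range seq.length).filter
    (fun j => ((seq.getD j (fun _ => none)) v ≠ none ∧
               (seq.getD j (fun _ => none)) v ≠ some bot) ∧ j ≤ m)
  let RT := (Finset.range seq.length).filter
    (fun j => ((seq.getD j (fun _ => none)) v ≠ none ∧
               (seq.getD j (fun _ => none)) v ≠ some bot) ∧ m < j)
  match LT.max with
  | some j => ((seq.getD j (fun _ => none)) v).getD bot
  | none =>
    match RT.min with
    | some j => ((seq.getD j (fun _ => none)) v).getD bot
    | none => bot

/-- The static predictive retrieval function equals `R`. -/
def prStatic {V D : Type} [DecidableEq D] (bot : D) (seq : List (State V D))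
    (t : ℕ) (v : V) : D :=
  Rfun bot seq t v

/-- The `LT` finset occurring in `Rfun`. -/
def LTset {V D : Type} [DecidableEq D] (bot : D) (seq : List (State V D))
    (m : ℕ) (v : V) : Finset ℕ :=
  (Finset.range seq.length).filter
    (fun j => ((seq.getD j (fun _ => none)) v ≠ none ∧
               (seq.getD j (fun _ => none)) v ≠ some bot) ∧ j ≤ m)

/-- The `RT` finset occurring in `Rfun`. -/
def RTset {V D : Type} [DecidableEq D] (bot : D) (seq : List (State V D))
    (m : ℕ) (v : V) : Finset ℕ :=
  (Finset.range seq.length).filter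
    (fun j => ((seq.getD j (fun _ => none)) v ≠ none ∧
               (seq.getD j (fun _ => none)) v ≠ some bot) ∧ m < j)

lemma Rfun_eq_match {V D : Type} [DecidableEq D] (bot : D) (seq : List (State V D))
    (m : ℕ) (v : V) :
    Rfun bot seq m v =
      (match (LTset bot seq m v).max with
      | some j => ((seq.getD j (fun _ => none)) v).getD bot
      | none =>
        match (RTset bot seq m v).min with
        | some j => ((seq.getD j (fun _ => none)) v).getD bot
        | none => bot) := rfl

lemma mem_LTset {V D : Type} [DecidableEq D] {bot : D} {seq : List (State V D)}
    {m : ℕ} {v : V} {j : ℕ} :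
    j ∈ LTset bot seq m v ↔
      j < seq.length ∧ ((seq.getD j (fun _ => none)) v ≠ none ∧
        (seq.getD j (fun _ => none)) v ≠ some bot) ∧ j ≤ m := by
  simp [LTset, Finset.mem_filter, Finset.mem_range, and_assoc]

lemma mem_RTset {V D : Type} [DecidableEq D] {bot : D} {seq : List (State V D)}
    {m : ℕ} {v : V} {j : ℕ} :
    j ∈ RTset bot seq m v ↔
      j < seq.length ∧ ((seq.getD j (fun _ => none)) v ≠ none ∧
        (seq.getD j (fun _ => none)) v ≠ some bot) ∧ m < j := by
  simp [RTset, Finset.mem_filter, Finset.mem_range, and_assoc]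

/-- At an active index, `Rfun` returns the value stored there. -/
lemma Rfun_self {V D : Type} [DecidableEq D] (bot : D) (seq : List (State V D))
    {j : ℕ} (v : V) (hj : j < seq.length)
    (h1 : (seq.getD j (fun _ => none)) v ≠ none)
    (h2 : (seq.getD j (fun _ => none)) v ≠ some bot) :
    Rfun bot seq j v = ((seq.getD j (fun _ => none)) v).getD bot := by
  have hmem : j ∈ LTset bot seq j v := mem_LTset.2 ⟨hj, ⟨h1, h2⟩, le_refl j⟩
  have hmax : (LTset bot seq j v).max = (j : WithBot ℕ) := by
    apply le_antisymm
    · exact Finset.max_le (fun a ha =>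
        WithBot.coe_le_coe.2 (mem_LTset.1 ha).2.2)
    · exact Finset.le_max hmem
  rw [Rfun_eq_match, hmax]
  rfl

/-- Claim L: `Rfun` at `t` equals `Rfun` at `b ≤ t` if there is no active index
in `(b, t]`. -/
lemma Rfun_claimL {V D : Type} [DecidableEq D] (bot : D) (seq : List (State V D))
    {b t : ℕ} (v : V) (hbt : b ≤ t)
    (hno : ∀ j, b < j → j ≤ t →
      ¬((seq.getD j (fun _ => none)) v ≠ none ∧
        (seq.getD j (fun _ => none)) v ≠ some bot)) :
    Rfun bot seq b v = Rfun bot seq t v := by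
  have hLT : LTset bot seq b v = LTset bot seq t v := by
    ext j
    rw [mem_LTset, mem_LTset]
    constructor
    · rintro ⟨h1, h2, h3⟩; exact ⟨h1, h2, h3.trans hbt⟩
    · rintro ⟨h1, h2, h3⟩
      refine ⟨h1, h2, ?_⟩
      by_contra h
      exact hno j (lt_of_not_ge h) h3 h2
  have hRT : RTset bot seq b v = RTset bot seq t v := by
    ext j
    rw [mem_RTset, mem_RTset]
    constructor
    · rintro ⟨h1, h2, h3⟩
      refine ⟨h1, h2, ?_⟩
      by_contra h
      exact hno j h3 (le_of_not_gt h) h2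
    · rintro ⟨h1, h2, h3⟩; exact ⟨h1, h2, lt_of_le_of_lt hbt h3⟩
  rw [Rfun_eq_match, Rfun_eq_match, hLT, hRT]

/-- Claim R: `Rfun` at `t` equals `Rfun` at `b > t` if there is no active index
below `b`. -/
lemma Rfun_claimR {V D : Type} [DecidableEq D] (bot : D) (seq : List (State V D))
    {b t : ℕ} (v : V) (htb : t < b) (hb : b < seq.length)
    (hno : ∀ j, j < b →
      ¬((seq.getD j (fun _ => none)) v ≠ none ∧
        (seq.getD j (fun _ => none)) v ≠ some bot)) :
    Rfun bot seq b v = Rfun bot seq t v := by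
  have hLTt : LTset bot seq t v = ∅ := by
    ext j
    simp only [mem_LTset, Finset.notMem_empty, iff_false]
    rintro ⟨h1, h2, h3⟩
    exact hno j (lt_of_le_of_lt h3 htb) h2
  by_cases hact : (seq.getD b (fun _ => none)) v ≠ none ∧
      (seq.getD b (fun _ => none)) v ≠ some bot
  · -- b is active
    have h1 : Rfun bot seq b v = ((seq.getD b (fun _ => none)) v).getD bot :=
      Rfun_self bot seq v hb hact.1 hact.2
    have hmemRT : b ∈ RTset bot seq t v := mem_RTset.2 ⟨hb, hact, htb⟩
    have hmin : (RTset bot seq t v).min = (b : WithTop ℕ) := by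
      apply le_antisymm
      · exact Finset.min_le hmemRT
      · exact Finset.le_min (fun a ha => by
          have := mem_RTset.1 ha
          have hba : b ≤ a := le_of_not_gt (fun h => hno a h this.2.1)
          exact WithTop.coe_le_coe.2 hba)
    have hmaxt : (LTset bot seq t v).max = ⊥ := by rw [hLTt]; rfl
    rw [h1, Rfun_eq_match bot seq t, hmaxt, hmin]
    rfl
  · -- b is not active
    have hLTb : LTset bot seq b v = ∅ := by
      ext j
      simp only [mem_LTset, Finset.notMem_empty, iff_false]
      rintro ⟨h1, h2, h3⟩
      rcases lt_or_eq_of_le h3 with h | h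
      · exact hno j h h2
      · exact hact (h ▸ h2)
    have hRT : RTset bot seq b v = RTset bot seq t v := by
      ext j
      rw [mem_RTset, mem_RTset]
      constructor
      · rintro ⟨h1, h2, h3⟩; exact ⟨h1, h2, htb.trans h3⟩
      · rintro ⟨h1, h2, h3⟩
        refine ⟨h1, h2, ?_⟩
        rcases lt_trichotomy j b with h | h | h
        · exact absurd h2 (hno j h)
        · exact absurd (h ▸ h2) hact
        · exact h
    have hmaxb : (LTset bot seq b v).max = ⊥ := by rw [hLTb]; rfl
    have hmaxt : (LTset bot seq t v).max = ⊥ := by rw [hLTt]; rfl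
    rw [Rfun_eq_match, Rfun_eq_match, hmaxb, hmaxt, hRT]

/-- Recursive Consistency of `pr_static`: filling unobserved
entries of `s⃗` with `R`'s own outputs does not change `R`. -/
theorem stmt7 {V D : Type} [DecidableEq D] (bot : D)
    (sseq wseq : List (State V D))
    (hlen : wseq.length = sseq.length)
    (hext : ∀ t, t < sseq.length →
      Ssub (sseq.getD t (fun _ => none)) (wseq.getD t (fun _ => none)))
    (hfill : ∀ t, t < sseq.length → ∀ v e,
      (wseq.getD t (fun _ => none)) v = some e →
      (sseq.getD t (fun _ => none)) v = none →
      e = Rfun bot sseq t v) :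
    ∀ t, t < sseq.length → ∀ v, Rfun bot wseq t v = Rfun bot sseq t v := by
  intro t ht v
  -- abbreviations
  set n := sseq.length with hn
  -- active in s implies active in w with same value
  have hAB : ∀ j, j < n →
      ((sseq.getD j (fun _ => none)) v ≠ none ∧
       (sseq.getD j (fun _ => none)) v ≠ some bot) →
      (wseq.getD j (fun _ => none)) v = (sseq.getD j (fun _ => none)) v := by
    intro j hj ⟨h1, h2⟩
    cases hs : (sseq.getD j (fun _ => none)) v with
    | none => exact absurd hs h1
    | some e => exact (hext j hj v e hs).trans rfl
  -- star: any w-active index holds the value `Rfun bot sseq j v`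
  have star : ∀ j, j < n →
      ((wseq.getD j (fun _ => none)) v ≠ none ∧
       (wseq.getD j (fun _ => none)) v ≠ some bot) →
      ((wseq.getD j (fun _ => none)) v).getD bot = Rfun bot sseq j v := by
    intro j hj ⟨h1, h2⟩
    cases hw : (wseq.getD j (fun _ => none)) v with
    | none => exact absurd hw h1
    | some e =>
      cases hs : (sseq.getD j (fun _ => none)) v with
      | none =>
        simpa using hfill j hj v e hw hs
      | some e' =>
        have heq : (wseq.getD j (fun _ => none)) v = some e' := hext j hj v e' hs
        have hee : e = e' := by rw [hw] at heq; exact (Option.some_inj.1 heq)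
        have hs1 : (sseq.getD j (fun _ => none)) v ≠ none := by simp [hs]
        have hs2 : (sseq.getD j (fun _ => none)) v ≠ some bot := by
          rw [hs, ← hee]; rw [hw] at h2; exact h2
        rw [Rfun_self bot sseq v hj hs1 hs2, hs]
        simp [hee]
  -- w-active version of LT/RT membership uses wseq.length; rewrite it
  have hwlen : wseq.length = n := hlen
  -- case analysis on the LT max of wseq at t
  rcases hmax : (LTset bot wseq t v).max with _ | b
  · -- LT of w empty
    have hLTw : LTset bot wseq t v = ∅ := Finset.max_eq_bot.1 hmax
    rcases hmin : (RTset bot wseq t v).min with _ | b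
    · -- RT of w also empty: everything is bot
      have hRTw : RTset bot wseq t v = ∅ := Finset.min_eq_top.1 hmin
      have hLTs : LTset bot sseq t v = ∅ := by
        ext j
        simp only [mem_LTset, Finset.notMem_empty, iff_false]
        rintro ⟨h1, h2, h3⟩
        have : j ∈ LTset bot wseq t v := by
          rw [mem_LTset, hwlen]
          refine ⟨h1, ?_, h3⟩
          rw [hAB j h1 h2]; exact h2
        rw [hLTw] at this; exact absurd this (Finset.notMem_empty j)
      have hRTs : RTset bot sseq t v = ∅ := by
        ext j
        simp only [mem_RTset, Finset.notMem_empty, iff_false]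
        rintro ⟨h1, h2, h3⟩
        have : j ∈ RTset bot wseq t v := by
          rw [mem_RTset, hwlen]
          refine ⟨h1, ?_, h3⟩
          rw [hAB j h1 h2]; exact h2
        rw [hRTw] at this; exact absurd this (Finset.notMem_empty j)
      have e1 : (LTset bot sseq t v).max = ⊥ := by rw [hLTs]; rfl
      have e2 : (RTset bot sseq t v).min = ⊤ := by rw [hRTs]; rfl
      rw [Rfun_eq_match, Rfun_eq_match, hmax, e1, hmin, e2]
    · -- RT of w has min b
      have hb := mem_RTset.1 (Finset.mem_of_min hmin)
      rw [hwlen] at hb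
      obtain ⟨hbn, hactb, htb⟩ := hb
      have h1 : Rfun bot wseq t v = ((wseq.getD b (fun _ => none)) v).getD bot := by
        rw [Rfun_eq_match, hmax, hmin]
      rw [h1, star b hbn hactb]
      apply Rfun_claimR bot sseq v htb hbn
      intro j hj hactj
      have hjn : j < n := hj.trans hbn
      have hactwj : (wseq.getD j (fun _ => none)) v ≠ none ∧
          (wseq.getD j (fun _ => none)) v ≠ some bot := by
        rw [hAB j hjn hactj]; exact hactj
      by_cases hjt : j ≤ t
      · have : j ∈ LTset bot wseq t v := by
          rw [mem_LTset, hwlen]; exact ⟨hjn, hactwj, hjt⟩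
        rw [hLTw] at this; exact absurd this (Finset.notMem_empty j)
      · have : j ∈ RTset bot wseq t v := by
          rw [mem_RTset, hwlen]; exact ⟨hjn, hactwj, lt_of_not_ge hjt⟩
        exact absurd hj (not_lt_of_ge (Finset.min_le_of_eq this hmin))
  · -- LT of w has max b
    have hb := mem_LTset.1 (Finset.mem_of_max hmax)
    rw [hwlen] at hb
    obtain ⟨hbn, hactb, hbt⟩ := hb
    have h1 : Rfun bot wseq t v = ((wseq.getD b (fun _ => none)) v).getD bot := by
      rw [Rfun_eq_match, hmax]
    rw [h1, star b hbn hactb]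
    apply Rfun_claimL bot sseq v hbt
    intro j hbj hjt hactj
    have hjn : j < n := lt_of_le_of_lt hjt ht
    have hactwj : (wseq.getD j (fun _ => none)) v ≠ none ∧
        (wseq.getD j (fun _ => none)) v ≠ some bot := by
      rw [hAB j hjn hactj]; exact hactj
    have : j ∈ LTset bot wseq t v := by
      rw [mem_LTset, hwlen]; exact ⟨hjn, hactwj, hjt⟩
    exact absurd (Finset.le_max_of_eq this hmax) (not_le_of_gt hbj)
end

section
/- For any state sequence s⃗, agent i, and timestamp t < |s⃗|, the agent's observation of the state at t is contained in the agent's predictive justified perspective at t: O_i(s⃗[t]) ⊆ f_i(s⃗)[t]. -/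
/-- The state assigning `e` to `v` and nothing else. -/
def single {V D : Type} [DecidableEq V] (v : V) (e : D) : State V D :=
  fun w => if w = v then some e else none

/-- The Predictive Justified Perspective function `f_i` for an agent with
observation function `O` and predictive retrieval functions `pr`. -/
def fJP {V D : Type} [DecidableEq V] [DecidableEq D] (bot : D)
    (O : State V D → State V D)
    (pr : List (State V D) → ℕ → V → D)
    (seq : List (State V D)) : List (State V D) :=
  (List.range seq.length).map (fun t =>
    let st := seq.getD t (fun _ => none)
    let s'' : State V D := fun v =>
      let e := pr (seq.map O) t v
      if O st v ≠ none ∨ O (override st (single v e)) v = none then some e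
      else none
    override (fun _ => some bot) s'')

/-- the agent's observation of the state at `t` is contained in
the agent's predictive justified perspective at `t`. -/
theorem stmt8 {V D : Type} [DecidableEq V] [DecidableEq D] (bot : D)
    (O : State V D → State V D)
    (hcontr : ∀ s, Ssub (O s) s)
    (hidem : ∀ s, O (O s) = O s)
    (hmono : ∀ s s', Ssub s s' → Ssub (O s) (O s'))
    (pr : List (State V D) → ℕ → V → D)
    (hpres : ∀ (seq : List (State V D)) (t : ℕ) (v : V) (e : D),
      t < seq.length → (seq.getD t (fun _ => none)) v = some e →
      pr seq t v = e)
    (seq : List (State V D)) (t : ℕ) (ht : t < seq.length) :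
    Ssub (O (seq.getD t (fun _ => none)))
      ((fJP bot O pr seq).getD t (fun _ => none)) := by
  intro v e hve
  have hst : (seq.getD t (fun _ => none)) v = some e := hcontr _ v e hve
  have hpr : pr (seq.map O) t v = e := by
    apply hpres _ _ _ _ (by simpa using ht)
    rw [List.getD_eq_getElem _ _ (by simpa using ht), List.getElem_map]
    rw [List.getD_eq_getElem _ _ ht] at hve
    exact hve
  have hlt : t < (List.range seq.length).length := by simpa using ht
  rw [fJP, List.getD_eq_getElem _ _ (by simpa using hlt), List.getElem_map,
    List.getElem_range]
  simp only [override, single]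
  rw [hpr]
  have : O (seq.getD t (fun _ => none)) v ≠ none := by rw [hve]; simp
  simp only [List.getD_eq_getElem?_getD] at this hve
  simp [this, hve]
end

section
/- Axiom K (Distribution) holds in the ternary semantics of the PJP model: if T[s⃗, B_i φ ∧ B_i(φ → ψ)] = 1 then T[s⃗, B_i ψ] = 1. -/
/-- Completion of a state sequence: override the all-⊥ state with each state. -/
def completeSeq {V D : Type} (bot : D) (seq : List (State V D)) :
    List (State V D) :=
  seq.map (fun s => override (fun _ => some bot) s)

/-- Axiom K (Distribution) in the ternary semantics of the PJP
model, where `φ → ψ` abbreviates `¬(φ ∧ ¬ψ)`. -/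
theorem stmt11 {V D F Agent : Type} (bot : D)
    (conj : F → F → F) (neg : F → F) (Bel : Agent → F → F)
    (f : Agent → List (State V D) → List (State V D))
    (T : List (State V D) → F → ℚ)
    (hrange : ∀ s φ, T s φ = 0 ∨ T s φ = 1/2 ∨ T s φ = 1)
    (hconj : ∀ s φ ψ, T s (conj φ ψ) = min (T s φ) (T s ψ))
    (hneg : ∀ s φ, T s (neg φ) = 1 - T s φ)
    (hB : ∀ s i φ, T s (Bel i φ) = T (f i (completeSeq bot s)) φ)
    (i : Agent) (s : List (State V D)) (φ ψ : F)
    (h : T s (conj (Bel i φ) (Bel i (neg (conj φ (neg ψ))))) = 1) :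
    T s (Bel i ψ) = 1 := by
  rw [hconj] at h
  have h1 : T s (Bel i φ) = 1 ∧ T s (Bel i (neg (conj φ (neg ψ)))) = 1 := by
    constructor <;> [have := min_le_left (T s (Bel i φ)) (T s (Bel i (neg (conj φ (neg ψ)))));
      have := min_le_right (T s (Bel i φ)) (T s (Bel i (neg (conj φ (neg ψ)))))] <;>
      rcases hrange s (Bel i φ) with h'|h'|h' <;>
      rcases hrange s (Bel i (neg (conj φ (neg ψ)))) with h''|h''|h'' <;>
      simp_all <;> linarith
  obtain ⟨ha, hb⟩ := h1
  rw [hB] at ha hb ⊢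
  rw [hneg, hconj, hneg] at hb
  set t := f i (completeSeq bot s)
  rcases hrange t ψ with h'|h'|h' <;> rw [ha, h'] at hb <;> norm_num at hb <;> linarith
end

section
/- Axiom 5 (Negative Introspection) holds in the ternary semantics of the PJP model: if f_i is idempotent on complete-state sequences (f_i∘f_i = f_i), then T[s⃗, ¬B_i φ] = 1 implies T[s⃗, B_i ¬B_i φ] = 1. -/
/-- A sequence of complete states: every state assigns a value to every
variable. -/
def CompleteSeq {V D : Type} (seq : List (State V D)) : Prop :=
  ∀ st ∈ seq, ∀ v, st v ≠ none

lemma completeSeq_complete {V D : Type} (bot : D) (s : List (State V D)) :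
    CompleteSeq (completeSeq bot s) := by
  intro st hst v
  simp [completeSeq] at hst
  obtain ⟨a, _, rfl⟩ := hst
  simp [override, Option.orElse]
  cases a v <;> simp

/-- Axiom 5 (Negative Introspection) in the ternary semantics of
the PJP model, given idempotence of `f_i` on complete-state sequences and that
`s_⊥⟨f_i(s⃗)⟩ = f_i(s⃗)` for complete sequences. -/
theorem stmt14 {V D F Agent : Type} (bot : D)
    (neg : F → F) (Bel : Agent → F → F)
    (f : Agent → List (State V D) → List (State V D))
    (T : List (State V D) → F → ℚ)
    (hrange : ∀ s φ, T s φ = 0 ∨ T s φ = 1/2 ∨ T s φ = 1)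
    (hneg : ∀ s φ, T s (neg φ) = 1 - T s φ)
    (hB : ∀ s i φ, T s (Bel i φ) = T (f i (completeSeq bot s)) φ)
    (hstab : ∀ i s, CompleteSeq s → completeSeq bot (f i s) = f i s)
    (hid : ∀ i s, CompleteSeq s → f i (f i s) = f i s)
    (i : Agent) (s : List (State V D)) (φ : F)
    (h : T s (neg (Bel i φ)) = 1) :
    T s (Bel i (neg (Bel i φ))) = 1 := by
  have hc := completeSeq_complete bot s
  rw [hneg, hB] at h
  have h0 : T (f i (completeSeq bot s)) φ = 0 := by linarith
  rw [hB, hneg, hB, hstab i _ hc, hid i _ hc, h0]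
  norm_num
end
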